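/- Let Γ be a uniform ranked poset and R = R(Γ). Then the augmentation ideal R_+ is the internal direct sum of the right ideals r_x R over x ∈ Γ′: R_+ = ⊕_{x ∈ Γ′} r_x R. -/

import Mathlib

/-!
Every defining relation of `R(Γ)` has the form `r_u · w = 0`, so the projection `P_x` of `T(W)`
onto the span of the words beginning with the letter `x` maps the ideal `I` into itself and
descends to `R`. On `R` it fixes `r_x R` and kills `r_y R` for `y ≠ x`, so these right ideals are
independent. They span `R_+` because `R_+` is spanned by the images of the nonempty words.
-/

set_option linter.unusedSectionVars false
set_option linter.unusedVariables false

open scoped Classical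

variable {Γ : Type*} [PartialOrder Γ] [OrderBot Γ] [Fintype Γ]

/-- `rk` is a rank function for the finite poset `Γ` (with least element `⊥`):
the bottom has rank `0` and ranks increase by one along covering relations.
Equivalently, all maximal chains in `[⊥, x]` have the same length `rk x`. -/
def IsRanked (rk : Γ → ℕ) : Prop :=
  rk ⊥ = 0 ∧ ∀ a b : Γ, a ⋖ b → rk b = rk a + 1

/-- `rankSet rk x n` is the set `S_x(n) = {y ≤ x : rk x - rk y = n}`. -/
def rankSet (rk : Γ → ℕ) (x : Γ) (n : ℕ) : Set Γ := {y | y ≤ x ∧ rk y + n = rk x}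

/-- `Γ` is uniform: for each `a`, the equivalence relation on `S_a(1)` generated by
`b ∼ c` whenever `S_b(1) ∩ S_c(1) ≠ ∅` has at most one equivalence class. -/
def Uniform (rk : Γ → ℕ) : Prop :=
  ∀ a b c : Γ, b ∈ rankSet rk a 1 → c ∈ rankSet rk a 1 →
    Relation.EqvGen
      (fun u v => u ∈ rankSet rk a 1 ∧ v ∈ rankSet rk a 1 ∧
        (rankSet rk u 1 ∩ rankSet rk v 1).Nonempty)
      b c

/-- `Γ' = Γ \ {⊥}`, indexing the generators `r_x`. -/
abbrev Vert (Γ : Type*) [PartialOrder Γ] [OrderBot Γ] := {x : Γ // x ≠ (⊥ : Γ)}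

variable (F : Type*) [Field F]

/-- The generator `r_x` of the tensor algebra `T(W)` on the vector space `W` with
basis `{r_x : x ∈ Γ'}`, realized as the free algebra on `Γ'`. -/
noncomputable def gen (x : Vert Γ) : FreeAlgebra F (Vert Γ) := FreeAlgebra.ι F x

/-- `r_x(n) = Σ_{y ∈ S_x(n)} r_y ∈ W` (which is `0` for `n ≥ rk x`). -/
noncomputable def rxn (rk : Γ → ℕ) (x : Γ) (n : ℕ) : FreeAlgebra F (Vert Γ) :=
  ∑ y ∈ Finset.univ.filter (fun y : Vert Γ => y.1 ∈ rankSet rk x n), gen F y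

/-- The quadratic relations spanning `I_2`: `r_x ⊗ r_y` for `y ∉ S_x(1)`, and
`r_x ⊗ r_x(1)`, for `x, y ∈ Γ'`. -/
inductive GRel (F : Type*) [Field F] {Γ : Type*} [PartialOrder Γ] [OrderBot Γ]
    [Fintype Γ] (rk : Γ → ℕ) :
    FreeAlgebra F (Vert Γ) → FreeAlgebra F (Vert Γ) → Prop
  | mono (x y : Vert Γ) (h : y.1 ∉ rankSet rk x.1 1) : GRel F rk (gen F x * gen F y) 0
  | adj (x : Vert Γ) : GRel F rk (gen F x * rxn F rk x.1 1) 0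

/-- The quadratic algebra `R(Γ) = T(W)/I`, where `I` is the two-sided ideal
generated by `I_2`. -/
abbrev RGamma (rk : Γ → ℕ) := RingQuot (GRel F rk)

/-- The image of `r_x` in `R(Γ)`. -/
noncomputable def rbar (rk : Γ → ℕ) (x : Vert Γ) : RGamma F rk :=
  RingQuot.mkAlgHom F (GRel F rk) (gen F x)

/-- The image of `r_x(n)` in `R(Γ)`. -/
noncomputable def rxnbar (rk : Γ → ℕ) (x : Γ) (n : ℕ) : RGamma F rk :=
  RingQuot.mkAlgHom F (GRel F rk) (rxn F rk x n)

/-- The right ideal `r_x R = {r_x · s : s ∈ R}`, as an `F`-submodule of `R(Γ)`. -/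
noncomputable def rIdeal (rk : Γ → ℕ) (x : Vert Γ) : Submodule F (RGamma F rk) :=
  LinearMap.range (LinearMap.mulLeft F (rbar F rk x))

/-- `H_x(n) = Σ_{y ∈ Γ', y ∉ S_x(n)} r_y R`. -/
noncomputable def Hsub (rk : Γ → ℕ) (x : Γ) (n : ℕ) : Submodule F (RGamma F rk) :=
  ⨆ (y : Vert Γ) (_ : y.1 ∉ rankSet rk x n), rIdeal F rk y

/-- The degree-one component `W` of `T(W)`: the span of the generators `r_x`. -/
noncomputable def Wsub : Submodule F (FreeAlgebra F (Vert Γ)) :=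
  Submodule.span F (Set.range (gen F (Γ := Γ)))

/-- The graded component `R_m` of `R(Γ)`: the image of `W^{⊗m}`. -/
noncomputable def Rcomp (rk : Γ → ℕ) (m : ℕ) : Submodule F (RGamma F rk) :=
  Submodule.map (RingQuot.mkAlgHom F (GRel F rk)).toLinearMap ((Wsub F (Γ := Γ)) ^ m)

/-- The augmentation ideal `R_+ = ⊕_{m ≥ 1} R_m` of `R(Γ)`. -/
noncomputable def Rplus (rk : Γ → ℕ) : Submodule F (RGamma F rk) :=
  ⨆ m : ℕ, Rcomp F rk (m + 1)

section RightIdeals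

open scoped Pointwise

variable {R A ι : Type*} [CommSemiring R] [Semiring A] [Algebra R A]

theorem iSupIndep_range_mulLeft {g : ι → A} (Q : ι → A →ₗ[R] A)
    (hQ_self : ∀ x t, Q x (g x * t) = g x * t)
    (hQ_ne : ∀ x y t, y ≠ x → Q x (g y * t) = 0) :
    iSupIndep fun x => LinearMap.range (LinearMap.mulLeft R (g x)) := by
  intro x
  have hker : (⨆ (y) (_ : y ≠ x), LinearMap.range (LinearMap.mulLeft R (g y))) ≤
      LinearMap.ker (Q x) :=
    iSup₂_le fun y hy => by
      rintro _ ⟨t, rfl⟩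
      exact hQ_ne x y t hy
  refine Submodule.disjoint_def.mpr ?_
  rintro _ ⟨t, rfl⟩ hv
  rw [LinearMap.mulLeft_apply, ← hQ_self]
  exact hker hv

theorem toSubmodule_adjoin_eq_iSup_pow (s : Set A) :
    Subalgebra.toSubmodule (Algebra.adjoin R s) = ⨆ n : ℕ, Submodule.span R s ^ n := by
  refine le_antisymm ?_ (iSup_le fun n => ?_)
  · rw [Algebra.adjoin_eq_span, Submodule.span_le]
    intro a ha
    obtain ⟨n, hn⟩ : ∃ n : ℕ, a ∈ Submodule.span R s ^ n := by
      induction ha using Submonoid.closure_induction with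
      | mem a ha => exact ⟨1, by simpa using Submodule.subset_span ha⟩
      | one => exact ⟨0, by rw [pow_zero]; exact Submodule.one_le.mp le_rfl⟩
      | mul a b _ _ iha ihb =>
        obtain ⟨m, hm⟩ := iha
        obtain ⟨n, hn⟩ := ihb
        exact ⟨m + n, pow_add (Submodule.span R s) m n ▸ Submodule.mul_mem_mul hm hn⟩
    exact Submodule.mem_iSup_of_mem n hn
  · rw [Submodule.span_pow, Submodule.span_le]
    exact Submonoid.pow_subset (S := (Algebra.adjoin R s).toSubmonoid) Algebra.subset_adjoin

theorem smul_top_eq_range_mulLeft (a : A) :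
    a • (⊤ : Submodule R A) = LinearMap.range (LinearMap.mulLeft R a) := by
  ext b
  simp [Submodule.mem_smul_pointwise_iff_exists]

theorem iSup_span_pow_succ_eq_iSup_range_mulLeft {g : ι → A}
    (hg : Algebra.adjoin R (Set.range g) = ⊤) :
    ⨆ m : ℕ, Submodule.span R (Set.range g) ^ (m + 1) =
      ⨆ x, LinearMap.range (LinearMap.mulLeft R (g x)) := by
  simp_rw [pow_succ', ← Submodule.mul_iSup, ← toSubmodule_adjoin_eq_iSup_pow, hg,
    Algebra.top_toSubmodule, Submodule.span_range_eq_iSup, Submodule.iSup_mul,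
    Submodule.span_singleton_mul, smul_top_eq_range_mulLeft]

end RightIdeals

section HeadProjection

open FreeAlgebra

variable {R X : Type*} [CommSemiring R] {r : FreeAlgebra R X → FreeAlgebra R X → Prop}

local notation "mk" => RingQuot.mkAlgHom R r

variable (r) in
def RelsStartWithGenerator : Prop :=
  ∀ a b, r a b → ∃ u w, a = ι R u * w ∧ b = 0

variable (r) in
/-- The image of `a` is `!![mk a, 0; mk (P_x a), ε a]`, where `P_x` projects onto the words
beginning with `x` and `ε` is the constant term; multiplicativity is the twisted Leibniz rule
`P_x (a * b) = P_x a * b + ε a • P_x b`. -/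
noncomputable def headMatrix [DecidableEq X] (x : X) :
    FreeAlgebra R X →ₐ[R] Matrix (Fin 2) (Fin 2) (RingQuot r) :=
  FreeAlgebra.lift R fun y => !![mk (ι R y), 0; if y = x then mk (ι R y) else 0, 0]

variable [DecidableEq X]

@[simp]
theorem headMatrix_ι (x y : X) :
    headMatrix r x (ι R y) = !![mk (ι R y), 0; if y = x then mk (ι R y) else 0, 0] :=
  FreeAlgebra.lift_ι_apply _ _

theorem headMatrix_row_zero (x : X) (a : FreeAlgebra R X) :
    headMatrix r x a 0 0 = mk a ∧ headMatrix r x a 0 1 = 0 := by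
  induction a using FreeAlgebra.induction with
  | grade0 c => simp [Algebra.algebraMap_eq_smul_one]
  | grade1 y => simp
  | mul a b iha ihb => simp [Matrix.mul_apply, Fin.sum_univ_two, iha, ihb]
  | add a b iha ihb => simp [iha, ihb]

theorem headMatrix_ι_mul (x y : X) (a : FreeAlgebra R X) :
    headMatrix r x (ι R y * a) =
      !![mk (ι R y * a), 0; if y = x then mk (ι R y * a) else 0, 0] := by
  obtain ⟨h00, h01⟩ := headMatrix_row_zero (r := r) x a
  ext i j
  fin_cases i <;> fin_cases j <;> simp [Matrix.mul_apply, Fin.sum_univ_two, h00, h01, ite_mul]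

theorem headMatrix_eq_of_rel (hr : RelsStartWithGenerator r) (x : X) {a b : FreeAlgebra R X}
    (h : r a b) : headMatrix r x a = headMatrix r x b := by
  obtain ⟨u, w, rfl, rfl⟩ := hr _ _ h
  rw [headMatrix_ι_mul, RingQuot.mkAlgHom_rel R h, map_zero, ite_self, map_zero]
  exact (Matrix.eta_fin_two (0 : Matrix (Fin 2) (Fin 2) (RingQuot r))).symm

noncomputable def headProj (hr : RelsStartWithGenerator r) (x : X) :
    RingQuot r →ₗ[R] RingQuot r :=
  Matrix.entryLinearMap R (RingQuot r) 1 0 ∘ₗ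
    (RingQuot.liftAlgHom R ⟨headMatrix r x, fun _ _ => headMatrix_eq_of_rel hr x⟩).toLinearMap

theorem headProj_mk_ι_mul (hr : RelsStartWithGenerator r) (x y : X) (a : FreeAlgebra R X) :
    headProj hr x (mk (ι R y * a)) = if y = x then mk (ι R y * a) else 0 := by
  rw [headProj, LinearMap.comp_apply, AlgHom.toLinearMap_apply,
    RingQuot.liftAlgHom_mkAlgHom_apply, headMatrix_ι_mul]
  rfl

theorem RelsStartWithGenerator.iSupIndep_range_mulLeft (hr : RelsStartWithGenerator r) :
    iSupIndep fun x => LinearMap.range (LinearMap.mulLeft R (mk (ι R x))) := by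
  refine _root_.iSupIndep_range_mulLeft (headProj hr) (fun x t => ?_) (fun x y t hyx => ?_)
  · obtain ⟨a, rfl⟩ := RingQuot.mkAlgHom_surjective R r t
    rw [← map_mul, headProj_mk_ι_mul, if_pos rfl]
  · obtain ⟨a, rfl⟩ := RingQuot.mkAlgHom_surjective R r t
    rw [← map_mul, headProj_mk_ι_mul, if_neg hyx]

end HeadProjection

theorem relsStartWithGenerator_GRel (rk : Γ → ℕ) : RelsStartWithGenerator (GRel F rk) := by
  rintro _ _ (⟨x, y, _⟩ | ⟨x⟩)
  · exact ⟨x, gen F y, rfl, rfl⟩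
  · exact ⟨x, rxn F rk x.1 1, rfl, rfl⟩

theorem Rcomp_eq_span_pow (rk : Γ → ℕ) (m : ℕ) :
    Rcomp F rk m = Submodule.span F (Set.range (rbar F rk)) ^ m := by
  rw [Rcomp, Submodule.map_pow, Wsub, Submodule.map_span, ← Set.range_comp]
  rfl

theorem adjoin_range_rbar (rk : Γ → ℕ) : Algebra.adjoin F (Set.range (rbar F rk)) = ⊤ := by
  change Algebra.adjoin F (Set.range (RingQuot.mkAlgHom F (GRel F rk) ∘ FreeAlgebra.ι F)) = ⊤
  rw [Set.range_comp, ← AlgHom.map_adjoin, FreeAlgebra.adjoin_range_ι, Algebra.map_top,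
    AlgHom.range_eq_top]
  exact RingQuot.mkAlgHom_surjective F _

theorem augmentation_ideal_directSum (rk : Γ → ℕ) :
    Rplus F rk = (⨆ x : Vert Γ, rIdeal F rk x) ∧
      iSupIndep (fun x : Vert Γ => rIdeal F rk x) := by
  constructor
  · simp_rw [Rplus, Rcomp_eq_span_pow,
      iSup_span_pow_succ_eq_iSup_range_mulLeft (adjoin_range_rbar F rk)]
    rfl
  · exact (relsStartWithGenerator_GRel F rk).iSupIndep_range_mulLeft
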